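/- For every R > 0, the Assouad dimension of the space of nonempty finite subsets of the interval [0,R] endowed with the Hausdorff distance is infinite: for every α > 0 and every C > 0 there exist r > 0, β ∈ (0,1], and a nonempty finite subset A ⊆ [0,R] such that the open d_H-ball of radius r centred at A cannot be covered by fewer than C·β^{−α} open d_H-balls of radius at most β·r. -/

import Mathlib

/-!
The grid `{i R / m : 0 ≤ i ≤ m}` is `R / m`-separated, so its `2 ^ (m + 1) - 1` nonempty subsets
are pairwise at Hausdorff distance at least `R / m`, and they all lie in the `d_H`-ball of radius
`2 R` about `{0}`. A `d_H`-ball of radius at most `R / (2 m)` contains at most one of them, so with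
`r = 2 R` and `β = 1 / (4 m)` every cover needs at least `2 ^ m` balls, whereas
`C β ^ (-α) = C (4 m) ^ α` grows only polynomially in `m`.
-/

open Metric Bornology Filter Finset

theorem eventually_mul_rpow_le_two_pow (C α : ℝ) :
    ∀ᶠ m : ℕ in atTop, C * (m : ℝ) ^ α ≤ 2 ^ m := by
  have hlittle := ((isLittleO_rpow_exp_pos_mul_atTop α (Real.log_pos one_lt_two)).const_mul_left
    C).comp_tendsto tendsto_natCast_atTop_atTop
  filter_upwards [hlittle.bound one_pos] with m hm
  have h2 : Real.exp (Real.log 2 * m) = 2 ^ m := by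
    rw [← Real.rpow_def_of_pos two_pos, Real.rpow_natCast]
  simp only [Function.comp_apply, h2, one_mul, Real.norm_eq_abs, abs_pow, abs_two] at hm
  exact (le_abs_self _).trans hm

theorem pairwise_le_dist_image_natCast_mul {δ : ℝ} (hδ : 0 ≤ δ) (t : Finset ℕ) :
    ((t.image fun i : ℕ => (i : ℝ) * δ : Finset ℝ) : Set ℝ).Pairwise
      fun x y => δ ≤ dist x y := by
  rw [coe_image]
  rintro _ ⟨i, -, rfl⟩ _ ⟨j, -, rfl⟩ hij
  rw [Real.dist_eq, ← sub_mul, abs_mul, abs_of_nonneg hδ]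
  refine le_mul_of_one_le_left hδ ?_
  exact_mod_cast Int.one_le_abs (sub_ne_zero.2 (Int.ofNat_inj.not.2 fun h => hij (by rw [h])))

theorem exists_finset_subset_Icc_card_eq_pairwise_le_dist {R : ℝ} (hR : 0 < R) {m : ℕ}
    (hm : 0 < m) : ∃ G : Finset ℝ, (G : Set ℝ) ⊆ Set.Icc 0 R ∧ #G = m + 1 ∧
      (G : Set ℝ).Pairwise fun x y => R / m ≤ dist x y := by
  refine ⟨(range (m + 1)).image fun i : ℕ => (i : ℝ) * (R / m), ?_, ?_,
    pairwise_le_dist_image_natCast_mul (by positivity) _⟩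
  · rw [coe_image]
    rintro _ ⟨i, hi, rfl⟩
    have hi : (i : ℝ) ≤ m := Nat.cast_le.2 (Nat.lt_succ_iff.1 (mem_range.1 hi))
    refine ⟨by positivity, ?_⟩
    calc (i : ℝ) * (R / m) ≤ m * (R / m) := by gcongr
      _ = R := by field_simp
  · rw [card_image_of_injective _ fun i j h => Nat.cast_injective
      (mul_right_cancel₀ (by positivity) h), card_range]

section HausdorffPacking

variable {X : Type*} [PseudoMetricSpace X]

theorem hausdorffDist_le_diam_of_subset {s t u : Set X} (hs : s.Nonempty) (ht : t.Nonempty)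
    (hu : IsBounded u) (hsu : s ⊆ u) (htu : t ⊆ u) : hausdorffDist s t ≤ diam u :=
  (hausdorffDist_le_diam hs (hu.subset hsu) ht (hu.subset htu)).trans
    (diam_mono (Set.union_subset hsu htu) hu)

theorem le_hausdorffDist_of_pairwise_le_dist {s S T : Finset X} {δ : ℝ}
    (hs : (s : Set X).Pairwise fun x y => δ ≤ dist x y) (hSs : S ⊆ s) (hTs : T ⊆ s)
    (hS : S.Nonempty) (hT : T.Nonempty) (hST : S ≠ T) :
    δ ≤ hausdorffDist (S : Set X) T := by
  wlog hST' : ¬ S ⊆ T generalizing S T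
  · rw [hausdorffDist_comm]
    exact this hTs hSs hT hS hST.symm fun hTS => hST (Finset.Subset.antisymm (not_not.1 hST') hTS)
  obtain ⟨x, hxS, hxT⟩ := Finset.not_subset.1 hST'
  calc δ ≤ infDist x (T : Set X) := (le_infDist (coe_nonempty.2 hT)).2 fun y hy =>
        hs (hSs hxS) (hTs hy) fun hxy => hxT (hxy ▸ hy)
    _ ≤ hausdorffDist (S : Set X) T := infDist_le_hausdorffDist_of_mem (mem_coe.2 hxS)
        (hausdorffEDist_ne_top_of_nonempty_of_bounded (coe_nonempty.2 hS) (coe_nonempty.2 hT)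
          S.finite_toSet.isBounded T.finite_toSet.isBounded)

theorem two_pow_card_sub_one_le_of_hausdorffDist_cover {s : Finset X} {δ : ℝ}
    (hs : (s : Set X).Pairwise fun x y => δ ≤ dist x y) {ι : Type*} [Fintype ι]
    {c : ι → Set X} (hc : ∀ i, (c i).Nonempty ∧ IsBounded (c i)) {ρ : ι → ℝ}
    (hρ : ∀ i, 2 * ρ i ≤ δ)
    (hcover : ∀ S ⊆ s, S.Nonempty → ∃ i, hausdorffDist (c i) S < ρ i) :
    2 ^ #s - 1 ≤ Fintype.card ι := by
  classical
  rw [← card_powerset, ← card_erase_of_mem (empty_mem_powerset s), ← card_univ]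
  refine card_le_card_of_forall_subsingleton (s := s.powerset.erase ∅) (t := univ)
    (fun (S : Finset X) i => hausdorffDist (c i) (S : Set X) < ρ i)
    (fun S hS => ?_) (fun i _ S ⟨hS, hSi⟩ T ⟨hT, hTi⟩ => ?_)
  · obtain ⟨hne, hSs⟩ := mem_erase.1 hS
    obtain ⟨i, hi⟩ := hcover S (mem_powerset.1 hSs) (nonempty_iff_ne_empty.2 hne)
    exact ⟨i, mem_univ i, hi⟩
  · obtain ⟨hS, hSs⟩ := mem_erase.1 hS
    obtain ⟨hT, hTs⟩ := mem_erase.1 hT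
    by_contra hST
    have hsep := le_hausdorffDist_of_pairwise_le_dist hs (mem_powerset.1 hSs)
      (mem_powerset.1 hTs) (nonempty_iff_ne_empty.2 hS) (nonempty_iff_ne_empty.2 hT) hST
    have hfin : hausdorffEDist (S : Set X) (c i) ≠ ⊤ :=
      hausdorffEDist_ne_top_of_nonempty_of_bounded (coe_nonempty.2 (nonempty_iff_ne_empty.2 hS))
        (hc i).1 S.finite_toSet.isBounded (hc i).2
    have : δ < 2 * ρ i := calc
      δ ≤ hausdorffDist (S : Set X) T := hsep
      _ ≤ hausdorffDist (S : Set X) (c i) + hausdorffDist (c i) T := hausdorffDist_triangle hfin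
      _ < 2 * ρ i := by rw [hausdorffDist_comm]; linarith
    linarith [hρ i]

end HausdorffPacking

theorem assouad_dim_hausdorff_bounded_infinite (R : ℝ) (hR : 0 < R) :
    ∀ α : ℝ, 0 < α → ∀ C : ℝ, 0 < C →
      ∃ r : ℝ, 0 < r ∧ ∃ β : ℝ, β ∈ Set.Ioc (0 : ℝ) 1 ∧
        ∃ A : {A : Set ℝ // A.Finite ∧ A.Nonempty ∧ A ⊆ Set.Icc 0 R},
          ∀ (k : ℕ) (c : Fin k → {A : Set ℝ // A.Finite ∧ A.Nonempty ∧ A ⊆ Set.Icc 0 R})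
            (ρ : Fin k → ℝ), (∀ i, ρ i ≤ β * r) →
            ({B : {A : Set ℝ // A.Finite ∧ A.Nonempty ∧ A ⊆ Set.Icc 0 R} |
                hausdorffDist A.val B.val < r} ⊆
              ⋃ i : Fin k, {B : {A : Set ℝ // A.Finite ∧ A.Nonempty ∧ A ⊆ Set.Icc 0 R} |
                hausdorffDist (c i).val B.val < ρ i}) →
            C * β ^ (-α) ≤ (k : ℝ) := by
  intro α _ C _
  obtain ⟨m, hgrowth, hm⟩ :=
    ((eventually_mul_rpow_le_two_pow (C * 4 ^ α) α).and (eventually_gt_atTop 0)).exists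
  obtain ⟨G, hG, hGcard, hGsep⟩ := exists_finset_subset_Icc_card_eq_pairwise_le_dist hR hm
  have hm' : (1 : ℝ) ≤ m := Nat.one_le_cast.2 hm
  refine ⟨2 * R, by positivity, (4 * m)⁻¹,
    ⟨by positivity, inv_le_one_of_one_le₀ (by linarith)⟩,
    ⟨{0}, Set.finite_singleton 0, Set.singleton_nonempty 0, by simp [hR.le]⟩, ?_⟩
  intro k c ρ hρ hcover
  have hcount := two_pow_card_sub_one_le_of_hausdorffDist_cover hGsep (c := fun i => (c i).val)
    (fun i => ⟨(c i).2.2.1, (c i).2.1.isBounded⟩) (ρ := ρ) (fun i => ?_) (fun S hSG hS => ?_)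
  · have hk : 2 ^ m ≤ k := by
      rw [hGcard, pow_succ, Fintype.card_fin] at hcount
      have := Nat.one_le_two_pow (n := m)
      omega
    calc C * (4 * (m : ℝ))⁻¹ ^ (-α) = C * 4 ^ α * m ^ α := by
          rw [Real.inv_rpow (by positivity), Real.rpow_neg (by positivity), inv_inv,
            Real.mul_rpow (by norm_num) (by positivity), mul_assoc]
      _ ≤ 2 ^ m := hgrowth
      _ ≤ k := by exact_mod_cast hk
  · calc 2 * ρ i ≤ 2 * ((4 * (m : ℝ))⁻¹ * (2 * R)) := by linarith [hρ i]
      _ = R / m := by field_simp; norm_num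
  · have hSR : (S : Set ℝ) ⊆ Set.Icc 0 R := (coe_subset.2 hSG).trans hG
    have hball : hausdorffDist ({0} : Set ℝ) S < 2 * R :=
      (hausdorffDist_le_diam_of_subset (Set.singleton_nonempty 0) (coe_nonempty.2 hS)
        (isBounded_Icc 0 R) (by simp [hR.le]) hSR).trans_lt (by rw [Real.diam_Icc hR.le]; linarith)
    simpa using hcover (a := ⟨S, S.finite_toSet, coe_nonempty.2 hS, hSR⟩) hball
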